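/- arXiv:2205.12801 — 5 statements merged into one kernel-verified Lean document; each statement's English description precedes it below -/
import Mathlib

section
/- Let Z be a subring of ℂ that is discrete (as a subset of ℂ in the norm topology) and closed under complex conjugation. Let (a_n)_{n≥1} be a sequence with a_n ∈ Z for all n, let x₀ ∈ ℂ, and define the forward orbit x_0 = x₀, x_{n+1} = (x_n)⁻¹ − a_{n+1}. Suppose that for every n ≥ 0 one has x_n ≠ 0 and ‖x_n‖ < 1. Then the continued fraction converges to x₀: the sequence of convergents c_n = P[a_1,…,a_n]·(Q[a_1,…,a_n])⁻¹ tends to x₀ as n → ∞. -/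
/-!
With `M(a) = [[0, 1], [1, a]]`, the column `(Pₙ, Qₙ)` is `M(a₁)⋯M(aₙ) (0, 1)`, while the orbit
relation says `M(a₁)⋯M(aₙ) (xₙ, 1) = (x₀ ⋯ xₙ₋₁)⁻¹ (x₀, 1)`. Comparing the two columns through
the determinant `(-1)ⁿ` gives `x₀ Qₙ - Pₙ = (-1)ⁿ x₀ x₁ ⋯ xₙ`. These errors have strictly
decreasing norms `≤ 1`, so the pairs `(Pₙ, Qₙ) ∈ Z²` are pairwise distinct; as `Z` is discrete
(hence closed) they leave every compact set, the error bound forces `‖Qₙ‖ → ∞`, and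
`‖Pₙ / Qₙ - x₀‖ ≤ 1 / ‖Qₙ‖ → 0`.
-/

open Filter

/-- `(P l, Q l)` for a digit list `l = [a_i, …, a_n]`:
`P [] = 0`, `Q [] = 1`, `P (a :: l) = Q l`, `Q (a :: l) = a * Q l + P l`. -/
def cfPQ {k : Type*} [DivisionRing k] : List k → k × k
  | [] => (0, 1)
  | a :: l => ((cfPQ l).2, a * (cfPQ l).2 + (cfPQ l).1)

/-- The digit list `[a_i, a_{i+1}, …, a_n]`. -/
def suffList {k : Type*} (a : ℕ → k) (i n : ℕ) : List k :=
  (List.range (n + 1 - i)).map (fun j => a (i + j))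

open Finset Topology

/-- The column `M(a₁)⋯M(aₙ) c` with `M(a) = [[0, 1], [1, a]]`; `cfPQ` is the case `c = (0, 1)`. -/
def cfCol {k : Type*} [Semiring k] (c : k × k) : List k → k × k
  | [] => c
  | a :: l => ((cfCol c l).2, a * (cfCol c l).2 + (cfCol c l).1)

lemma cfCol_zero_one {k : Type*} [DivisionRing k] (l : List k) : cfCol (0, 1) l = cfPQ l := by
  induction l with
  | nil => rfl
  | cons a l ih => simp only [cfCol, cfPQ, ih]

lemma cfCol_det {k : Type*} [CommRing k] (c d : k × k) (l : List k) :
    (cfCol c l).1 * (cfCol d l).2 - (cfCol d l).1 * (cfCol c l).2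
      = (-1) ^ l.length * (c.1 * d.2 - d.1 * c.2) := by
  induction l with
  | nil => simp [cfCol]
  | cons a l ih =>
    simp only [cfCol, List.length_cons, pow_succ]
    linear_combination (-1 : k) * ih

lemma cfPQ_mem_subring {k : Type*} [DivisionRing k] (S : Subring k) {l : List k}
    (hl : ∀ b ∈ l, b ∈ S) : (cfPQ l).1 ∈ S ∧ (cfPQ l).2 ∈ S := by
  induction l with
  | nil => exact ⟨S.zero_mem, S.one_mem⟩
  | cons a l ih =>
    obtain ⟨hP, hQ⟩ := ih fun b hb => hl b (List.mem_cons_of_mem a hb)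
    exact ⟨hQ, S.add_mem (S.mul_mem (hl a List.mem_cons_self) hQ) hP⟩

section suffList

variable {k : Type*} (a : ℕ → k)

lemma suffList_eq_nil {i n : ℕ} (h : n < i) : suffList a i n = [] := by
  simp [suffList, show n + 1 - i = 0 by omega]

lemma suffList_eq_cons {i n : ℕ} (h : i ≤ n) : suffList a i n = a i :: suffList a (i + 1) n := by
  simp only [suffList, show n + 1 - i = n - i + 1 by omega, show n + 1 - (i + 1) = n - i by omega,
    List.range_succ_eq_map, List.map_cons, List.map_map, Nat.add_zero]
  exact congrArg _ (List.map_congr_left fun j _ => congrArg a (by simp; omega))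

lemma length_suffList (i n : ℕ) : (suffList a i n).length = n + 1 - i := by
  simp [suffList]

lemma mem_suffList {i n : ℕ} {b : k} (hb : b ∈ suffList a i n) : ∃ j, i ≤ j ∧ a j = b := by
  obtain ⟨j, -, rfl⟩ := List.mem_map.1 hb
  exact ⟨i + j, Nat.le_add_right i j, rfl⟩

end suffList

def cfNum {k : Type*} [DivisionRing k] (a : ℕ → k) (n : ℕ) : k := (cfPQ (suffList a 1 n)).1

def cfDen {k : Type*} [DivisionRing k] (a : ℕ → k) (n : ℕ) : k := (cfPQ (suffList a 1 n)).2

section orbit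

variable {k : Type*} {a x : ℕ → k}

/-- The orbit relation `xₙ = T_{aₙ₊₁}⁻¹ xₙ₊₁`, written without inverses. -/
lemma mul_add_succ_eq_one [DivisionRing k] (hstep : ∀ n, x (n + 1) = (x n)⁻¹ - a (n + 1))
    (hne : ∀ n, x n ≠ 0) (n : ℕ) : x n * (a (n + 1) + x (n + 1)) = 1 := by
  rw [hstep, add_sub_cancel, mul_inv_cancel₀ (hne n)]

/-- `x_i = T⁻¹_{a_{i+1}} ⋯ T⁻¹_{a_{i+m}} x_{i+m}`, in homogeneous coordinates. -/
lemma prod_smul_cfCol [CommRing k] (horbit : ∀ n, x n * (a (n + 1) + x (n + 1)) = 1)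
    (m i : ℕ) :
    (∏ t ∈ range m, x (i + t)) • cfCol (x (i + m), 1) (suffList a (i + 1) (i + m))
      = (x i, 1) := by
  induction m generalizing i with
  | zero => simp [suffList_eq_nil a (Nat.lt_succ_self i), cfCol]
  | succ m ih =>
    have hV := ih (i + 1)
    rw [prod_range_succ', show i + (m + 1) = i + 1 + m by omega,
      suffList_eq_cons a (by omega), cfCol]
    have hπ : ∏ t ∈ range m, x (i + (t + 1)) = ∏ t ∈ range m, x (i + 1 + t) :=
      prod_congr rfl fun t _ => by rw [add_comm t, add_assoc]
    simp only [Prod.smul_mk, Prod.smul_fst, Prod.smul_snd, smul_eq_mul, Prod.ext_iff] at hV ⊢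
    rw [hπ, add_zero]
    constructor
    · linear_combination x i * hV.2
    · linear_combination x i * a (i + 1) * hV.2 + x i * hV.1 + horbit i

lemma mul_cfDen_sub_cfNum [Field k] (horbit : ∀ n, x n * (a (n + 1) + x (n + 1)) = 1) (n : ℕ) :
    x 0 * cfDen a n - cfNum a n = (-1) ^ n * ∏ t ∈ range (n + 1), x t := by
  have hV := prod_smul_cfCol horbit n 0
  have hdet := cfCol_det (x n, 1) (0, 1) (suffList a 1 n)
  simp only [zero_add, cfCol_zero_one, length_suffList, Nat.add_sub_cancel] at hV hdet
  simp only [Prod.smul_fst, Prod.smul_snd, smul_eq_mul, Prod.ext_iff] at hV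
  rw [cfNum, cfDen, prod_range_succ]
  linear_combination (-(cfPQ (suffList a 1 n)).2) * hV.1 + (cfPQ (suffList a 1 n)).1 * hV.2
    + (∏ t ∈ range n, x t) * hdet

lemma norm_mul_cfDen_sub_cfNum [NormedField k] (horbit : ∀ n, x n * (a (n + 1) + x (n + 1)) = 1)
    (n : ℕ) : ‖x 0 * cfDen a n - cfNum a n‖ = ∏ t ∈ range (n + 1), ‖x t‖ := by
  simp [mul_cfDen_sub_cfNum horbit, norm_prod]

end orbit

lemma strictAnti_prod_range {f : ℕ → ℝ} (hpos : ∀ n, 0 < f n) (hlt : ∀ n, f n < 1) :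
    StrictAnti fun n => ∏ t ∈ range n, f t :=
  strictAnti_nat_of_succ_lt fun n => by
    rw [prod_range_succ]
    exact mul_lt_of_lt_one_right (prod_pos fun t _ => hpos t) (hlt n)

lemma tendsto_atTop_cocompact_of_injective {X Y : Type*} [TopologicalSpace X] [DiscreteTopology X]
    [TopologicalSpace Y] {e : X → Y} (he : IsClosedEmbedding e) {v : ℕ → X}
    (hv : Function.Injective v) : Tendsto (e ∘ v) atTop (cocompact Y) := by
  rw [← Nat.cofinite_eq_atTop]
  exact (tendsto_cofinite_cocompact_of_discrete he.tendsto_cocompact).comp hv.tendsto_cofinite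

lemma AddSubgroup.tendsto_prod_cocompact_of_injective {E : Type*} [AddCommGroup E]
    [TopologicalSpace E] [IsTopologicalAddGroup E] [T2Space E] {G : AddSubgroup E}
    [DiscreteTopology G] {u v : ℕ → E} (hu : ∀ n, u n ∈ G) (hv : ∀ n, v n ∈ G)
    (huv : Function.Injective fun n => (u n, v n)) :
    Tendsto (fun n => (u n, v n)) atTop (cocompact (E × E)) := by
  have he := G.isClosed_of_discrete.isClosedEmbedding_subtypeVal
  exact tendsto_atTop_cocompact_of_injective (he.prodMap he)
    (v := fun n => (⟨u n, hu n⟩, ⟨v n, hv n⟩)) fun m n h => huv (by simpa using h)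

section approximation

variable {K : Type*} [NormedField K] {p q : ℕ → K} {y : K}

lemma tendsto_norm_snd_of_norm_mul_sub_le_one (hle : ∀ n, ‖y * q n - p n‖ ≤ 1)
    (hpq : Tendsto (fun n => ‖(p n, q n)‖) atTop atTop) :
    Tendsto (fun n => ‖q n‖) atTop atTop := by
  have hbound n : (‖(p n, q n)‖ - 1) / (‖y‖ + 1) ≤ ‖q n‖ := by
    have hp : ‖p n‖ ≤ ‖y‖ * ‖q n‖ + 1 := by
      calc ‖p n‖ ≤ ‖y * q n‖ + ‖y * q n - p n‖ := norm_le_norm_add_norm_sub ..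
        _ ≤ ‖y‖ * ‖q n‖ + 1 := by rw [norm_mul]; linarith [hle n]
    rw [div_le_iff₀ (by positivity), Prod.norm_mk]
    have := norm_nonneg (q n)
    have := norm_nonneg y
    exact sub_le_iff_le_add.2 (max_le (by nlinarith) (by nlinarith))
  exact tendsto_atTop_mono hbound
    ((tendsto_atTop_add_const_right _ (-1) hpq).atTop_div_const (by positivity))

lemma tendsto_mul_inv_of_norm_mul_sub_le_one (hle : ∀ n, ‖y * q n - p n‖ ≤ 1)
    (hq : Tendsto (fun n => ‖q n‖) atTop atTop) :
    Tendsto (fun n => p n * (q n)⁻¹) atTop (𝓝 y) := by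
  rw [← tendsto_sub_nhds_zero_iff]
  refine squeeze_zero_norm' ?_ hq.inv_tendsto_atTop
  filter_upwards [hq.eventually_gt_atTop 0] with n hn
  have hq0 : q n ≠ 0 := norm_pos_iff.1 hn
  calc ‖p n * (q n)⁻¹ - y‖ = ‖y * q n - p n‖ * ‖q n‖⁻¹ := by
        rw [← norm_inv, ← norm_mul, ← norm_neg]
        congr 1
        field_simp
        ring
    _ ≤ ‖q n‖⁻¹ := mul_le_of_le_one_left (by positivity) (hle n)

end approximation

theorem complex_cf_convergence_general (Z : Subring ℂ) (hZdisc : DiscreteTopology Z)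
    (a : ℕ → ℂ) (ha : ∀ n, 1 ≤ n → a n ∈ Z)
    (x₀ : ℂ) (x : ℕ → ℂ) (hx0 : x 0 = x₀)
    (hstep : ∀ n, x (n + 1) = (x n)⁻¹ - a (n + 1))
    (hne : ∀ n, x n ≠ 0) (hlt : ∀ n, ‖x n‖ < 1) :
    Tendsto (fun n => (cfPQ (suffList a 1 n)).1 * ((cfPQ (suffList a 1 n)).2)⁻¹)
      atTop (nhds x₀) := by
  subst hx0
  have herr := norm_mul_cfDen_sub_cfNum (mul_add_succ_eq_one hstep hne)
  have hle n : ‖x 0 * cfDen a n - cfNum a n‖ ≤ 1 :=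
    (herr n).trans_le (prod_le_one (fun t _ => norm_nonneg _) fun t _ => (hlt t).le)
  have hanti := strictAnti_prod_range (fun n => norm_pos_iff.2 (hne n)) hlt
  have hinj : Function.Injective fun n => (cfNum a n, cfDen a n) := fun m n h => by
    have := congrArg (fun pq : ℂ × ℂ => ‖x 0 * pq.2 - pq.1‖) h
    simp only [herr] at this
    exact Nat.succ_injective (hanti.injective this)
  have hmem n : cfNum a n ∈ Z ∧ cfDen a n ∈ Z :=
    cfPQ_mem_subring Z fun b hb => by
      obtain ⟨j, hj, rfl⟩ := mem_suffList a hb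
      exact ha j hj
  have : DiscreteTopology Z.toAddSubgroup := hZdisc
  have hpq := Z.toAddSubgroup.tendsto_prod_cocompact_of_injective (fun n => (hmem n).1)
    (fun n => (hmem n).2) hinj
  exact tendsto_mul_inv_of_norm_mul_sub_le_one hle
    (tendsto_norm_snd_of_norm_mul_sub_le_one hle (tendsto_norm_cocompact_atTop.comp hpq))

/-- Theorem 1.2 of the paper for `k = ℂ`. -/
theorem complex_cf_convergence (Z : Subring ℂ) (hZdisc : DiscreteTopology Z)
    (hZconj : ∀ z ∈ Z, starRingEnd ℂ z ∈ Z)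
    (a : ℕ → ℂ) (ha : ∀ n, 1 ≤ n → a n ∈ Z)
    (x₀ : ℂ) (x : ℕ → ℂ) (hx0 : x 0 = x₀)
    (hstep : ∀ n, x (n + 1) = (x n)⁻¹ - a (n + 1))
    (hne : ∀ n, x n ≠ 0) (hlt : ∀ n, ‖x n‖ < 1) :
    Tendsto (fun n => (cfPQ (suffList a 1 n)).1 * ((cfPQ (suffList a 1 n)).2)⁻¹)
      atTop (nhds x₀) :=
  complex_cf_convergence_general Z hZdisc a ha x₀ x hx0 hstep hne hlt
end

section
/- Let ℍ be the real quaternions and Z a subring of ℍ that is discrete (as a subset of ℍ in the norm topology) and closed under quaternionic conjugation (star). Let (a_n)_{n≥1} be a sequence with a_n ∈ Z, let x₀ ∈ ℍ, and define the forward orbit x_0 = x₀, x_{n+1} = (x_n)⁻¹ − a_{n+1}; assume x_n ≠ 0 for all n ≥ 0. Suppose: (1) for all 0 ≤ m ≤ n and every nonzero z ∈ Z, one has ∏_{i=m}^{n} ‖x_i‖ ≠ ‖z‖; and (2) the partial products ∏_{i=0}^{n} ‖x_i‖ tend to 0 as n → ∞. Then the sequence of convergents c_n = P[a_1,…,a_n]·(Q[a_1,…,a_n])⁻¹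 tends to x₀ as n → ∞. -/
open Filter

/-!
Write `cfMat a = !![0, 1; 1, a]`; it acts on `x = v₀ v₁⁻¹` as `x ↦ (x + a)⁻¹`, and the second
column of `A = cfMat a₁ ⋯ cfMat aₙ` is `(P, Q)`. Along the orbit, `A (xₙ, 1)ᵀ = (x₀, 1)ᵀ u` with
`‖u‖ = ∏_{i<n} ‖xᵢ‖⁻¹`. The inverse `N` of `A` has entries in `Z`, and `N₀₀` inverts the Schur
complement of `Q` in `A`, so `N₀₀ (x₀ - P Q⁻¹) u = xₙ`. Discreteness of `Z` bounds `‖N₀₀‖`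
below by some `δ > 0`, whence `‖x₀ - P Q⁻¹‖ ≤ δ⁻¹ ∏_{i≤n} ‖xᵢ‖ → 0`. Finally `Q ≠ 0`, since
otherwise `∏_{i≤n} ‖xᵢ‖ = ‖N₀₁‖` with `N₀₁ ∈ Z \ {0}`.
-/

open Matrix

section DivisionRing

variable {k : Type*} [DivisionRing k]

def cfMat (a : k) : Matrix (Fin 2) (Fin 2) k := !![0, 1; 1, a]

def cfMatInv (a : k) : Matrix (Fin 2) (Fin 2) k := !![-a, 1; 1, 0]

lemma cfMat_mul_cfMatInv (a : k) : cfMat a * cfMatInv a = 1 := by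
  simp [cfMat, cfMatInv, one_fin_two]

lemma cfMatInv_mul_cfMat (a : k) : cfMatInv a * cfMat a = 1 := by
  simp [cfMat, cfMatInv, one_fin_two]

def cfMatList (l : List k) : Matrix (Fin 2) (Fin 2) k := (l.map cfMat).prod

def cfMatListInv (l : List k) : Matrix (Fin 2) (Fin 2) k := (l.reverse.map cfMatInv).prod

lemma cfMatList_mul_cfMatListInv (l : List k) : cfMatList l * cfMatListInv l = 1 := by
  induction l with
  | nil => simp [cfMatList, cfMatListInv]
  | cons a l ih =>
    simp only [cfMatList, cfMatListInv, mul_assoc, List.map_cons, List.reverse_cons,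
      List.map_append, List.prod_cons, List.prod_append, List.map_nil, List.prod_nil,
      mul_one] at ih ⊢
    rw [← mul_assoc (l.map cfMat).prod, ih, one_mul, cfMat_mul_cfMatInv]

lemma cfMatListInv_mul_cfMatList (l : List k) : cfMatListInv l * cfMatList l = 1 := by
  induction l with
  | nil => simp [cfMatList, cfMatListInv]
  | cons a l ih =>
    simp only [cfMatList, cfMatListInv, List.map_cons, List.reverse_cons, List.map_append,
      List.prod_cons, List.prod_append, List.map_nil, List.prod_nil, mul_one] at ih ⊢
    rw [mul_assoc, ← mul_assoc (cfMatInv a), cfMatInv_mul_cfMat, one_mul, ih]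

lemma cfMatListInv_mem_matrix (Z : Subring k) {l : List k} (hl : ∀ b ∈ l, b ∈ Z) :
    cfMatListInv l ∈ Z.matrix := by
  refine Subring.list_prod_mem _ fun M hM => ?_
  obtain ⟨b, hb, rfl⟩ := List.mem_map.mp hM
  have hbZ := hl b (List.mem_reverse.mp hb)
  intro i j
  fin_cases i <;> fin_cases j <;> simp [cfMatInv, hbZ, Z.one_mem, Z.zero_mem]

lemma cfPQ_eq_cfMatList (l : List k) : cfPQ l = (cfMatList l 0 1, cfMatList l 1 1) := by
  induction l with
  | nil => simp [cfPQ, cfMatList]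
  | cons a l ih =>
    simp [cfPQ, cfMatList, ih, cfMat, Matrix.mul_apply, Fin.sum_univ_two, add_comm]

lemma mul_cfMat_apply_inv_sub (A : Matrix (Fin 2) (Fin 2) k) (b : k) {y : k} (hy : y ≠ 0)
    (i : Fin 2) :
    (A * cfMat b) i 0 * (y⁻¹ - b) + (A * cfMat b) i 1 = (A i 0 * y + A i 1) * y⁻¹ := by
  simp only [cfMat, Matrix.mul_apply, Fin.sum_univ_two, of_apply, cons_val', cons_val_zero,
    cons_val_one, empty_val', cons_val_fin_one]
  rw [show (A i 0 * y + A i 1) * y⁻¹ = A i 0 * (y * y⁻¹) + A i 1 * y⁻¹ by noncomm_ring,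
    mul_inv_cancel₀ hy]
  noncomm_ring

/-- `N 0 0` is the inverse of the Schur complement `A 0 0 - A 0 1 (A 1 1)⁻¹ A 1 0`. -/
lemma mul_sub_convergent_mul {A N : Matrix (Fin 2) (Fin 2) k} (hNA : N * A = 1)
    (hQ : A 1 1 ≠ 0) {x y : k} (hxy : A 0 0 * y + A 0 1 = x * (A 1 0 * y + A 1 1)) :
    N 0 0 * ((x - A 0 1 * (A 1 1)⁻¹) * (A 1 0 * y + A 1 1)) = y := by
  have h00 : N 0 0 * A 0 0 + N 0 1 * A 1 0 = 1 := by
    simpa [Matrix.mul_apply, Fin.sum_univ_two] using congrFun (congrFun hNA 0) 0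
  have h01 : N 0 0 * A 0 1 = -(N 0 1 * A 1 1) := by
    have := congrFun (congrFun hNA 0) 1
    simp only [Matrix.mul_apply, Fin.sum_univ_two, one_apply_ne zero_ne_one] at this
    exact eq_neg_of_add_eq_zero_left this
  calc N 0 0 * ((x - A 0 1 * (A 1 1)⁻¹) * (A 1 0 * y + A 1 1))
      = N 0 0 * (x * (A 1 0 * y + A 1 1)) - N 0 0 * A 0 1 * (A 1 1)⁻¹ * A 1 0 * y
        - N 0 0 * A 0 1 * ((A 1 1)⁻¹ * A 1 1) := by noncomm_ring
    _ = (N 0 0 * A 0 0 - N 0 0 * A 0 1 * (A 1 1)⁻¹ * A 1 0) * y := by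
        rw [← hxy, inv_mul_cancel₀ hQ]; noncomm_ring
    _ = (N 0 0 * A 0 0 + N 0 1 * (A 1 1 * (A 1 1)⁻¹) * A 1 0) * y := by
        rw [h01]; noncomm_ring
    _ = y := by rw [mul_inv_cancel₀ hQ, mul_one, h00, one_mul]

end DivisionRing

lemma suffList_one_succ {k : Type*} (a : ℕ → k) (n : ℕ) :
    suffList a 1 (n + 1) = suffList a 1 n ++ [a (n + 1)] := by
  simp [suffList, List.range_succ, Nat.add_comm]

lemma exists_pos_le_norm_of_discreteTopology {E : Type*} [NormedAddCommGroup E] (s : Set E)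
    [DiscreteTopology s] (h0 : (0 : E) ∈ s) : ∃ δ > 0, ∀ z ∈ s, z ≠ 0 → δ ≤ ‖z‖ := by
  obtain ⟨δ, hδ, hball⟩ :=
    Metric.isOpen_singleton_iff.mp (isOpen_discrete ({⟨0, h0⟩} : Set s))
  refine ⟨δ, hδ, fun z hz hz0 => le_of_not_gt fun hlt => hz0 ?_⟩
  have := hball ⟨z, hz⟩ (by simpa [Subtype.dist_eq] using hlt)
  exact congrArg Subtype.val this

lemma norm_prod_map_range {k : Type*} [NormedDivisionRing k] (f : ℕ → k) (n : ℕ) :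
    ‖((List.range n).map f).prod‖ = ∏ i ∈ Finset.range n, ‖f i‖ := by
  induction n with
  | zero => simp
  | succ n ih => rw [List.prod_range_succ, norm_mul, ih, Finset.prod_range_succ]

section Orbit

variable {k : Type*} [NormedDivisionRing k]

lemma mem_of_mem_suffList_one {Z : Subring k} {a : ℕ → k} (ha : ∀ n, 1 ≤ n → a n ∈ Z) {n : ℕ}
    {b : k} (hb : b ∈ suffList a 1 n) : b ∈ Z := by
  obtain ⟨j, -, rfl⟩ := List.mem_map.mp hb
  exact ha _ (Nat.le_add_right 1 j)

lemma cfMatList_suffList_orbit {a x : ℕ → k} (hstep : ∀ n, x (n + 1) = (x n)⁻¹ - a (n + 1))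
    (hne : ∀ n, x n ≠ 0) (n : ℕ) (i : Fin 2) :
    cfMatList (suffList a 1 n) i 0 * x n + cfMatList (suffList a 1 n) i 1 =
      ![x 0, 1] i * ((List.range n).map fun j => (x j)⁻¹).prod := by
  induction n with
  | zero => fin_cases i <;> simp [suffList, cfMatList]
  | succ n ih =>
    have hA : cfMatList (suffList a 1 (n + 1)) =
        cfMatList (suffList a 1 n) * cfMat (a (n + 1)) := by
      simp [cfMatList, suffList_one_succ]
    rw [hA, hstep, mul_cfMat_apply_inv_sub _ _ (hne n), ih, List.prod_range_succ, mul_assoc]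

lemma norm_orbit_denominator_mul_prod {a x : ℕ → k}
    (hstep : ∀ n, x (n + 1) = (x n)⁻¹ - a (n + 1)) (hne : ∀ n, x n ≠ 0) (n : ℕ) :
    ‖cfMatList (suffList a 1 n) 1 0 * x n + cfMatList (suffList a 1 n) 1 1‖ *
      ∏ i ∈ Finset.range n, ‖x i‖ = 1 := by
  rw [cfMatList_suffList_orbit hstep hne, norm_mul, norm_prod_map_range]
  simp only [Matrix.cons_val_one, Matrix.cons_val_fin_one, norm_one, one_mul, norm_inv,
    Finset.prod_inv_distrib]
  exact inv_mul_cancel₀ (Finset.prod_ne_zero_iff.mpr fun i _ => norm_ne_zero_iff.mpr (hne i))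

lemma cfMatList_suffList_one_one_ne_zero {Z : Subring k} {a x : ℕ → k}
    (ha : ∀ n, 1 ≤ n → a n ∈ Z) (hstep : ∀ n, x (n + 1) = (x n)⁻¹ - a (n + 1))
    (hne : ∀ n, x n ≠ 0) (hwin : ∀ n, ∀ z ∈ Z, z ≠ 0 → ∏ i ∈ Finset.range (n + 1), ‖x i‖ ≠ ‖z‖)
    (n : ℕ) : cfMatList (suffList a 1 n) 1 1 ≠ 0 := by
  have hden := norm_orbit_denominator_mul_prod hstep hne n
  have hN : cfMatListInv (suffList a 1 n) 0 1 ∈ Z :=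
    cfMatListInv_mem_matrix Z (fun _ hb => mem_of_mem_suffList_one ha hb) 0 1
  have hAN := congrFun (congrFun (cfMatList_mul_cfMatListInv (suffList a 1 n)) 1) 1
  set A := cfMatList (suffList a 1 n)
  set N := cfMatListInv (suffList a 1 n)
  intro hQ
  simp only [Matrix.mul_apply, Fin.sum_univ_two, hQ, zero_mul, add_zero, one_apply_eq] at hAN
  rw [hQ, add_zero, norm_mul] at hden
  refine hwin n _ hN (right_ne_zero_of_mul_eq_one hAN) ?_
  have hnorm : ‖A 1 0‖ * ‖N 0 1‖ = 1 := by rw [← norm_mul, hAN, norm_one]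
  refine mul_left_cancel₀ (left_ne_zero_of_mul_eq_one hnorm) ?_
  rw [hnorm, ← hden, Finset.prod_range_succ]
  ring

lemma norm_sub_convergent_le {Z : Subring k} {δ : ℝ} (hδ : 0 < δ)
    (hZ : ∀ z ∈ Z, z ≠ 0 → δ ≤ ‖z‖) {a x : ℕ → k}
    (ha : ∀ n, 1 ≤ n → a n ∈ Z) (hstep : ∀ n, x (n + 1) = (x n)⁻¹ - a (n + 1))
    (hne : ∀ n, x n ≠ 0) (hwin : ∀ n, ∀ z ∈ Z, z ≠ 0 → ∏ i ∈ Finset.range (n + 1), ‖x i‖ ≠ ‖z‖)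
    (n : ℕ) :
    ‖x 0 - (cfPQ (suffList a 1 n)).1 * ((cfPQ (suffList a 1 n)).2)⁻¹‖ ≤
      (∏ i ∈ Finset.range (n + 1), ‖x i‖) / δ := by
  have hQ := cfMatList_suffList_one_one_ne_zero ha hstep hne hwin n
  have hden := norm_orbit_denominator_mul_prod hstep hne n
  have hN : cfMatListInv (suffList a 1 n) 0 0 ∈ Z :=
    cfMatListInv_mem_matrix Z (fun _ hb => mem_of_mem_suffList_one ha hb) 0 0
  have hxy : cfMatList (suffList a 1 n) 0 0 * x n + cfMatList (suffList a 1 n) 0 1 =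
      x 0 * (cfMatList (suffList a 1 n) 1 0 * x n + cfMatList (suffList a 1 n) 1 1) := by
    rw [cfMatList_suffList_orbit hstep hne, cfMatList_suffList_orbit hstep hne]
    simp
  have herr := mul_sub_convergent_mul (cfMatListInv_mul_cfMatList _) hQ hxy
  simp only [cfPQ_eq_cfMatList]
  set A := cfMatList (suffList a 1 n)
  set N := cfMatListInv (suffList a 1 n)
  have hN0 : N 0 0 ≠ 0 := fun h => hne n (by rw [← herr, h, zero_mul])
  have herr' : ‖N 0 0‖ * (‖x 0 - A 0 1 * (A 1 1)⁻¹‖ * ‖A 1 0 * x n + A 1 1‖) = ‖x n‖ := by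
    simpa only [norm_mul] using congrArg norm herr
  have hnorm : ‖N 0 0‖ * ‖x 0 - A 0 1 * (A 1 1)⁻¹‖ = ∏ i ∈ Finset.range (n + 1), ‖x i‖ :=
    calc ‖N 0 0‖ * ‖x 0 - A 0 1 * (A 1 1)⁻¹‖
        = ‖N 0 0‖ * ‖x 0 - A 0 1 * (A 1 1)⁻¹‖ *
            (‖A 1 0 * x n + A 1 1‖ * ∏ i ∈ Finset.range n, ‖x i‖) := by
          rw [hden, mul_one]
      _ = ‖x n‖ * ∏ i ∈ Finset.range n, ‖x i‖ := by
          rw [← herr']; ring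
      _ = ∏ i ∈ Finset.range (n + 1), ‖x i‖ := by rw [Finset.prod_range_succ, mul_comm]
  rw [le_div_iff₀ hδ, ← hnorm, mul_comm]
  exact mul_le_mul_of_nonneg_right (hZ _ hN hN0) (norm_nonneg _)

end Orbit

theorem quaternion_cf_convergence_of_transcendental_general (Z : Subring (Quaternion ℝ))
    (hZdisc : DiscreteTopology Z)
    (a : ℕ → Quaternion ℝ) (ha : ∀ n, 1 ≤ n → a n ∈ Z)
    (x₀ : Quaternion ℝ) (x : ℕ → Quaternion ℝ) (hx0 : x 0 = x₀)
    (hstep : ∀ n, x (n + 1) = (x n)⁻¹ - a (n + 1))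
    (hne : ∀ n, x n ≠ 0)
    (hwindow : ∀ m n : ℕ, m ≤ n → ∀ z ∈ Z, z ≠ 0 →
      ∏ i ∈ Finset.Icc m n, ‖x i‖ ≠ ‖z‖)
    (hprod : Tendsto (fun n => ∏ i ∈ Finset.range (n + 1), ‖x i‖) atTop (nhds 0)) :
    Tendsto (fun n => (cfPQ (suffList a 1 n)).1 * ((cfPQ (suffList a 1 n)).2)⁻¹)
      atTop (nhds x₀) := by
  have := hZdisc
  obtain ⟨δ, hδ, hZ⟩ :=
    exists_pos_le_norm_of_discreteTopology (Z : Set (Quaternion ℝ)) Z.zero_mem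
  have hwin : ∀ n, ∀ z ∈ Z, z ≠ 0 → ∏ i ∈ Finset.range (n + 1), ‖x i‖ ≠ ‖z‖ := fun n => by
    simpa only [Nat.range_succ_eq_Icc_zero] using hwindow 0 n n.zero_le
  subst hx0
  refine tendsto_iff_norm_sub_tendsto_zero.mpr <| squeeze_zero (fun _ => norm_nonneg _)
    (fun n => ?_) (by simpa using hprod.div_const δ)
  rw [norm_sub_rev]
  exact norm_sub_convergent_le hδ hZ ha hstep hne hwin n

/-- Theorem 1.4 of the paper for `k = ℍ` (the real quaternions). -/
theorem quaternion_cf_convergence_of_transcendental (Z : Subring (Quaternion ℝ))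
    (hZdisc : DiscreteTopology Z)
    (hZconj : ∀ z ∈ Z, star z ∈ Z)
    (a : ℕ → Quaternion ℝ) (ha : ∀ n, 1 ≤ n → a n ∈ Z)
    (x₀ : Quaternion ℝ) (x : ℕ → Quaternion ℝ) (hx0 : x 0 = x₀)
    (hstep : ∀ n, x (n + 1) = (x n)⁻¹ - a (n + 1))
    (hne : ∀ n, x n ≠ 0)
    (hwindow : ∀ m n : ℕ, m ≤ n → ∀ z ∈ Z, z ≠ 0 →
      ∏ i ∈ Finset.Icc m n, ‖x i‖ ≠ ‖z‖)
    (hprod : Tendsto (fun n => ∏ i ∈ Finset.range (n + 1), ‖x i‖) atTop (nhds 0)) :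
    Tendsto (fun n => (cfPQ (suffList a 1 n)).1 * ((cfPQ (suffList a 1 n)).2)⁻¹)
      atTop (nhds x₀) :=
  quaternion_cf_convergence_of_transcendental_general Z hZdisc a ha x₀ x hx0 hstep hne hwindow hprod
end

section
/- Let k be a normed division ring (e.g. ℝ, ℂ, or the quaternions). Fix n ≥ 0, digits a_1,…,a_n ∈ k, and x₀ ∈ k, and define the forward orbit x_0 = x₀, x_{i+1} = (x_i)⁻¹ − a_{i+1}; assume x_i ≠ 0 for 0 ≤ i ≤ n−1. Define the backward partial convergents v_n = 0 and v_{i−1} = (v_i + a_i)⁻¹ for i = n, n−1, …, 1, and assume v_i + a_i ≠ 0 for every 1 ≤ i ≤ n (so that all inversions are well-defined). Then ‖v_0 − x_0‖ = (∏_{i=0}^{n} ‖x_i‖)·(∏_{i=0}^{n−1} ‖v_i‖). -/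
/-!
In a normed division ring `‖x - y‖ = ‖x⁻¹ - y⁻¹‖ * ‖x‖ * ‖y‖`. Both `x_{i+1} + a_{i+1}` and
`v_{i+1} + a_{i+1}` are the inverses of `x_i` and `v_i`, so `v_i⁻¹ - x_i⁻¹ = v_{i+1} - x_{i+1}`:
each step of the orbit multiplies the distance by `‖x_i‖ * ‖v_i‖`, and after `n` steps it is
`‖v_n - x_n‖ = ‖x_n‖`.
-/

open Finset

section NormedDivisionRing

variable {k : Type*} [NormedDivisionRing k]

theorem norm_sub_eq_norm_inv_sub_inv_mul {x y : k} (hx : x ≠ 0) (hy : y ≠ 0) :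
    ‖x - y‖ = ‖x⁻¹ - y⁻¹‖ * ‖x‖ * ‖y‖ := by
  have hxy : ‖x‖ * ‖y‖ ≠ 0 := by positivity
  rw [← dist_eq_norm, ← dist_eq_norm, dist_inv_inv₀ hx hy, mul_assoc, div_mul_cancel₀ _ hxy]

theorem norm_inv_add_sub_eq_mul {a u w : k} (hu : u + a ≠ 0) (hw : w ≠ 0) :
    ‖(u + a)⁻¹ - w‖ = ‖u - (w⁻¹ - a)‖ * ‖w‖ * ‖(u + a)⁻¹‖ := by
  rw [norm_sub_eq_norm_inv_sub_inv_mul (inv_ne_zero hu) hw, inv_inv,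
    show u + a - w⁻¹ = u - (w⁻¹ - a) by abel]
  ring

theorem norm_sub_eq_norm_sub_mul_prod {n : ℕ} {a x v : ℕ → k}
    (hx : ∀ i, x (i + 1) = (x i)⁻¹ - a (i + 1)) (hx_ne : ∀ i < n, x i ≠ 0)
    (hv : ∀ i < n, v i = (v (i + 1) + a (i + 1))⁻¹)
    (hv_ne : ∀ i < n, v (i + 1) + a (i + 1) ≠ 0) {j : ℕ} (hj : j ≤ n) :
    ‖v 0 - x 0‖ = ‖v j - x j‖ * ∏ i ∈ range j, (‖x i‖ * ‖v i‖) := by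
  induction j with
  | zero => simp
  | succ j ih =>
    have hjn : j < n := hj
    have hstep : ‖v j - x j‖ = ‖v (j + 1) - x (j + 1)‖ * ‖x j‖ * ‖v j‖ := by
      rw [hx, hv j hjn]
      exact norm_inv_add_sub_eq_mul (hv_ne j hjn) (hx_ne j hjn)
    rw [ih hjn.le, hstep, prod_range_succ]
    ring

end NormedDivisionRing

theorem cf_distance_product_general {k : Type*} [NormedDivisionRing k]
    (n : ℕ) (a : ℕ → k)
    (x : ℕ → k)
    (hstep : ∀ i, x (i + 1) = (x i)⁻¹ - a (i + 1))
    (hxne : ∀ i < n, x i ≠ 0)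
    (v : ℕ → k) (hvn : v n = 0)
    (hvstep : ∀ i, 1 ≤ i → i ≤ n → v (i - 1) = (v i + a i)⁻¹)
    (hvne : ∀ i, 1 ≤ i → i ≤ n → v i + a i ≠ 0) :
    ‖v 0 - x 0‖ =
      (∏ i ∈ Finset.range (n + 1), ‖x i‖) * ∏ i ∈ Finset.range n, ‖v i‖ := by
  have hv : ∀ i < n, v i = (v (i + 1) + a (i + 1))⁻¹ := fun i hi => by
    simpa using hvstep (i + 1) (by omega) hi
  have hv_ne : ∀ i < n, v (i + 1) + a (i + 1) ≠ 0 := fun i hi => hvne (i + 1) (by omega) hi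
  rw [norm_sub_eq_norm_sub_mul_prod hstep hxne hv hv_ne le_rfl, hvn, zero_sub, norm_neg,
    prod_mul_distrib, prod_range_succ]
  ring

/-- Lemma 1.5 (prodIntro) of the paper, in a normed division ring. -/
theorem cf_distance_product {k : Type*} [NormedDivisionRing k]
    (n : ℕ) (a : ℕ → k) (x₀ : k)
    (x : ℕ → k) (hx0 : x 0 = x₀)
    (hstep : ∀ i, x (i + 1) = (x i)⁻¹ - a (i + 1))
    (hxne : ∀ i < n, x i ≠ 0)
    (v : ℕ → k) (hvn : v n = 0)
    (hvstep : ∀ i, 1 ≤ i → i ≤ n → v (i - 1) = (v i + a i)⁻¹)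
    (hvne : ∀ i, 1 ≤ i → i ≤ n → v i + a i ≠ 0) :
    ‖v 0 - x 0‖ =
      (∏ i ∈ Finset.range (n + 1), ‖x i‖) * ∏ i ∈ Finset.range n, ‖v i‖ :=
  cf_distance_product_general n a x hstep hxne v hvn hvstep hvne
end

section
/- Let ℍ be the real quaternions and Z a discrete subring of ℍ (a subring that is a discrete subset in the norm topology). Let (a_n)_{n≥1} be a sequence with a_n ∈ Z, let x₀ ∈ ℍ, define the forward orbit x_0 = x₀, x_{n+1} = (x_n)⁻¹ − a_{n+1}, and suppose x_n ≠ 0 and ‖x_n‖ < 1 for all n ≥ 0. Then for every n ≥ 1: Q[a_i,…,a_n] ≠ 0 for all 1 ≤ i ≤ n, and ∏_{i=0}^{n−1} ‖P[a_{i+1},…,a_n]·(Q[a_{i+1},…,a_n])⁻¹‖ = ‖Q[a_1,…,a_n]‖⁻¹ ≤ 1; in particular this product is uniformly bounded above over all n. -/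
/-! Write `P_i, Q_i` for the continuants of `[a_i, …, a_n]`. Substituting
`a_{j+1} = x_j⁻¹ - x_{j+1}` into the recurrence gives
`P_{j+1} - x_j Q_{j+1} = -x_j (P_{j+2} - x_{j+1} Q_{j+2})`, and the last of these errors is
`-x_n`; hence `‖P_{j+1} - x_j Q_{j+1}‖ < 1` for every `j`. If `Q_{j+1}` vanished, the element
`P_{j+1}` of the discrete ring `Z` would have norm `< 1`, hence vanish too; but `P` and `Q`
never vanish together. Since `P_i = Q_{i+1}`, the product of the norms of the tail
convergents telescopes to `‖Q_{n+1}‖ / ‖Q_1‖ = ‖Q_1‖⁻¹`, and `‖Q_1‖ ≥ 1` because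
`Q_1 ∈ Z \ {0}`. -/

open Filter Topology

theorem Subring.eq_zero_of_norm_lt_one {K : Type*} [NormedDivisionRing K] (Z : Subring K)
    [DiscreteTopology Z] {z : K} (hz : z ∈ Z) (h : ‖z‖ < 1) : z = 0 := by
  have hpow : Tendsto (fun k : ℕ => (⟨z, hz⟩ : Z) ^ k) atTop (𝓝 0) :=
    tendsto_subtype_rng.2 (by simpa using tendsto_pow_atTop_nhds_zero_of_norm_lt_one h)
  obtain ⟨k, hk⟩ := (hpow.eventually ((isOpen_discrete {0}).mem_nhds rfl)).exists
  exact eq_zero_of_pow_eq_zero (by simpa using congrArg Subtype.val hk)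

theorem Finset.prod_range_div_of_ne_zero {G₀ : Type*} [CommGroupWithZero G₀] (f : ℕ → G₀)
    (hf : ∀ i, f i ≠ 0) (n : ℕ) : ∏ i ∈ range n, f (i + 1) / f i = f n / f 0 := by
  induction n with
  | zero => simp [hf 0]
  | succ n ih => rw [prod_range_succ, ih, mul_comm, div_mul_div_cancel₀ (hf n)]

section suffList

variable {α : Type*} (a : ℕ → α) {i n : ℕ}

theorem suffList_of_lt (h : n < i) : suffList a i n = [] := by
  simp [suffList, Nat.sub_eq_zero_of_le h]

theorem suffList_of_le (h : i ≤ n) : suffList a i n = a i :: suffList a (i + 1) n := by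
  rw [suffList, suffList, show n + 1 - i = n + 1 - (i + 1) + 1 by omega, List.range_succ_eq_map]
  simp [Nat.add_comm, Nat.add_left_comm]

end suffList

section DivisionRing

variable {K : Type*} [DivisionRing K]

theorem cfPQ_ne_zero (l : List K) : cfPQ l ≠ 0 := by
  induction l with
  | nil => simp [cfPQ]
  | cons b l ih =>
    intro h
    simp only [cfPQ, Prod.ext_iff, Prod.fst_zero, Prod.snd_zero] at h
    exact ih (Prod.ext (by simpa [h.1] using h.2) h.1)

theorem cfPQ_mem (S : Subring K) {l : List K} (h : ∀ b ∈ l, b ∈ S) :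
    (cfPQ l).1 ∈ S ∧ (cfPQ l).2 ∈ S := by
  induction l with
  | nil => exact ⟨S.zero_mem, S.one_mem⟩
  | cons b l ih =>
    obtain ⟨hP, hQ⟩ := ih fun c hc => h c (List.mem_cons_of_mem b hc)
    exact ⟨hQ, S.add_mem (S.mul_mem (h b List.mem_cons_self) hQ) hP⟩

variable (a : ℕ → K) {i n : ℕ}

theorem cfPQ_suffList_mem (S : Subring K) (ha : ∀ k, i ≤ k → a k ∈ S) :
    (cfPQ (suffList a i n)).1 ∈ S ∧ (cfPQ (suffList a i n)).2 ∈ S :=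
  cfPQ_mem S fun b hb => by
    obtain ⟨k, -, rfl⟩ := List.mem_map.1 hb
    exact ha (i + k) (Nat.le_add_right i k)

theorem cfPQ_suffList_fst (h : i ≤ n) :
    (cfPQ (suffList a i n)).1 = (cfPQ (suffList a (i + 1) n)).2 := by
  rw [suffList_of_le a h, cfPQ]

theorem cfPQ_suffList_fst_sub_mul_snd {x : ℕ → K} {j : ℕ}
    (hstep : x (j + 1) = (x j)⁻¹ - a (j + 1)) (hx : x j ≠ 0) (h : j + 1 ≤ n) :
    (cfPQ (suffList a (j + 1) n)).1 - x j * (cfPQ (suffList a (j + 1) n)).2 =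
      -(x j * ((cfPQ (suffList a (j + 2) n)).1 - x (j + 1) * (cfPQ (suffList a (j + 2) n)).2)) := by
  have ha : a (j + 1) = (x j)⁻¹ - x (j + 1) := by rw [hstep, sub_sub_cancel]
  rw [suffList_of_le a h, cfPQ, ha]
  simp only [sub_mul, mul_add, mul_sub, ← mul_assoc, mul_inv_cancel₀ hx, one_mul]
  abel

end DivisionRing

section Orbit

variable {K : Type*} [NormedDivisionRing K] {a x : ℕ → K}

theorem norm_cfPQ_suffList_fst_sub_mul_snd_lt_one
    (hstep : ∀ n, x (n + 1) = (x n)⁻¹ - a (n + 1)) (hne : ∀ n, x n ≠ 0)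
    (hlt : ∀ n, ‖x n‖ < 1) (n j : ℕ) :
    ‖(cfPQ (suffList a (j + 1) n)).1 - x j * (cfPQ (suffList a (j + 1) n)).2‖ < 1 := by
  induction h : n - j generalizing j with
  | zero => simpa [suffList_of_lt a (show n < j + 1 by omega), cfPQ] using hlt j
  | succ d ih =>
    rw [cfPQ_suffList_fst_sub_mul_snd a (hstep j) (hne j) (by omega), norm_neg, norm_mul]
    exact mul_lt_one_of_nonneg_of_lt_one_left (norm_nonneg _) (hlt j) (ih (j + 1) (by omega)).le

theorem cfPQ_suffList_snd_ne_zero (Z : Subring K) [DiscreteTopology Z]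
    (ha : ∀ k, 1 ≤ k → a k ∈ Z) (hstep : ∀ n, x (n + 1) = (x n)⁻¹ - a (n + 1))
    (hne : ∀ n, x n ≠ 0) (hlt : ∀ n, ‖x n‖ < 1) (n : ℕ) {i : ℕ} (hi : 1 ≤ i) :
    (cfPQ (suffList a i n)).2 ≠ 0 := by
  obtain ⟨j, rfl⟩ : ∃ j, i = j + 1 := ⟨i - 1, by omega⟩
  intro hQ
  have hP : (cfPQ (suffList a (j + 1) n)).1 = 0 := by
    refine Z.eq_zero_of_norm_lt_one (cfPQ_suffList_mem a Z fun k hk => ha k (hi.trans hk)).1 ?_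
    simpa [hQ] using norm_cfPQ_suffList_fst_sub_mul_snd_lt_one hstep hne hlt n j
  exact cfPQ_ne_zero _ (Prod.ext hP hQ)

end Orbit

theorem quaternion_cf_denominator_bound_general (Z : Subring (Quaternion ℝ))
    (hZdisc : DiscreteTopology Z)
    (a : ℕ → Quaternion ℝ) (ha : ∀ n, 1 ≤ n → a n ∈ Z)
    (x : ℕ → Quaternion ℝ)
    (hstep : ∀ n, x (n + 1) = (x n)⁻¹ - a (n + 1))
    (hne : ∀ n, x n ≠ 0) (hlt : ∀ n, ‖x n‖ < 1) :
    ∀ n, 1 ≤ n →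
      (∀ i, 1 ≤ i → i ≤ n → (cfPQ (suffList a i n)).2 ≠ 0) ∧
      (∏ i ∈ Finset.range n,
          ‖(cfPQ (suffList a (i + 1) n)).1 * ((cfPQ (suffList a (i + 1) n)).2)⁻¹‖)
        = ‖(cfPQ (suffList a 1 n)).2‖⁻¹ ∧
      ‖(cfPQ (suffList a 1 n)).2‖⁻¹ ≤ 1 := by
  intro n _
  have hQ : ∀ i, 1 ≤ i → (cfPQ (suffList a i n)).2 ≠ 0 := fun i hi =>
    cfPQ_suffList_snd_ne_zero Z ha hstep hne hlt n hi
  have hQ₁ : 1 ≤ ‖(cfPQ (suffList a 1 n)).2‖ := not_lt.1 fun h =>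
    hQ 1 le_rfl (Z.eq_zero_of_norm_lt_one (cfPQ_suffList_mem a Z ha).2 h)
  refine ⟨fun i hi _ => hQ i hi, ?_, inv_le_one_of_one_le₀ hQ₁⟩
  calc ∏ i ∈ Finset.range n,
        ‖(cfPQ (suffList a (i + 1) n)).1 * ((cfPQ (suffList a (i + 1) n)).2)⁻¹‖
      = ∏ i ∈ Finset.range n,
          ‖(cfPQ (suffList a (i + 2) n)).2‖ / ‖(cfPQ (suffList a (i + 1) n)).2‖ :=
        Finset.prod_congr rfl fun i hi => by
          rw [norm_mul, norm_inv, cfPQ_suffList_fst a (Finset.mem_range.1 hi), div_eq_mul_inv]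
    _ = ‖(cfPQ (suffList a (n + 1) n)).2‖ / ‖(cfPQ (suffList a 1 n)).2‖ :=
        Finset.prod_range_div_of_ne_zero (fun i => ‖(cfPQ (suffList a (i + 1) n)).2‖)
          (fun i => norm_ne_zero_iff.2 (hQ (i + 1) (Nat.le_add_left 1 i))) n
    _ = ‖(cfPQ (suffList a 1 n)).2‖⁻¹ := by
        simp [suffList_of_lt a (Nat.lt_succ_self n), cfPQ]

/-- Lemma 1.6 of the paper for the quaternions: the denominators of all suffixes
are nonzero and the product of the norms of the tail convergents equals
`‖Q[a_1,…,a_n]‖⁻¹ ≤ 1`. -/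
theorem quaternion_cf_denominator_bound (Z : Subring (Quaternion ℝ))
    (hZdisc : DiscreteTopology Z)
    (a : ℕ → Quaternion ℝ) (ha : ∀ n, 1 ≤ n → a n ∈ Z)
    (x₀ : Quaternion ℝ) (x : ℕ → Quaternion ℝ) (hx0 : x 0 = x₀)
    (hstep : ∀ n, x (n + 1) = (x n)⁻¹ - a (n + 1))
    (hne : ∀ n, x n ≠ 0) (hlt : ∀ n, ‖x n‖ < 1) :
    ∀ n, 1 ≤ n →
      (∀ i, 1 ≤ i → i ≤ n → (cfPQ (suffList a i n)).2 ≠ 0) ∧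
      (∏ i ∈ Finset.range n,
          ‖(cfPQ (suffList a (i + 1) n)).1 * ((cfPQ (suffList a (i + 1) n)).2)⁻¹‖)
        = ‖(cfPQ (suffList a 1 n)).2‖⁻¹ ∧
      ‖(cfPQ (suffList a 1 n)).2‖⁻¹ ≤ 1 :=
  quaternion_cf_denominator_bound_general Z hZdisc a ha x hstep hne hlt
end

section
/- Let k be a normed division ring, n ≥ 1, and a_1,…,a_n ∈ k. Let x₀, y₀ ∈ k with x₀ ≠ y₀, and define the forward orbits x_0 = x₀, x_{i+1} = (x_i)⁻¹ − a_{i+1} and y_0 = y₀, y_{i+1} = (y_i)⁻¹ − a_{i+1}. Assume that for 0 ≤ i ≤ n−1 one has x_i ≠ 0, ‖x_i‖ < 1, and ‖y_i‖ = 1. Then ‖x_n − y_n‖ > ‖x₀ − y₀‖. -/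
/-!
Since `T_a x - T_a y = x⁻¹ - y⁻¹ = x⁻¹ (y - x) y⁻¹`, one step of the orbits multiplies their
distance by `‖x‖⁻¹ ‖y‖⁻¹`, which exceeds `1` when `‖x‖ < 1 = ‖y‖`. Inversion is injective, so
the orbits never meet and every step strictly increases their distance.
-/

theorem norm_inv_sub_inv {k : Type*} [NormedDivisionRing k] {x y : k} (hx : x ≠ 0)
    (hy : y ≠ 0) :
    ‖x⁻¹ - y⁻¹‖ = ‖x - y‖ / (‖x‖ * ‖y‖) := by
  rw [inv_sub_inv' hx hy, norm_mul, norm_mul, norm_inv, norm_inv, norm_sub_rev]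
  field_simp

theorem norm_sub_lt_norm_inv_sub_inv {k : Type*} [NormedDivisionRing k] {x y : k}
    (hx₀ : x ≠ 0) (hx : ‖x‖ < 1) (hy : ‖y‖ = 1) (hxy : x ≠ y) :
    ‖x - y‖ < ‖x⁻¹ - y⁻¹‖ := by
  have hy₀ : y ≠ 0 := norm_ne_zero_iff.mp (hy ▸ one_ne_zero)
  rw [norm_inv_sub_inv hx₀ hy₀, hy, mul_one, lt_div_iff₀ (norm_pos_iff.mpr hx₀)]
  exact mul_lt_of_lt_one_right (norm_pos_iff.mpr (sub_ne_zero.mpr hxy)) hx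

theorem orbits_ne_of_ne {k : Type*} [DivisionRing k] {a x y : ℕ → k} (hxy : x 0 ≠ y 0)
    (hxstep : ∀ i, x (i + 1) = (x i)⁻¹ - a (i + 1))
    (hystep : ∀ i, y (i + 1) = (y i)⁻¹ - a (i + 1)) (i : ℕ) : x i ≠ y i := by
  induction i with
  | zero => exact hxy
  | succ i ih => rwa [hxstep, hystep, ne_eq, sub_left_inj, inv_inj]

/-- Lemma 3.4 (trapOrbits) of the paper in the division ring setting: if the
orbit of `y₀` stays on the unit sphere while the orbit of `x₀` stays strictly
inside the unit ball, then the distance between the two orbits strictly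
increases. -/
theorem cf_orbit_repulsion {k : Type*} [NormedDivisionRing k]
    (n : ℕ) (hn : 1 ≤ n) (a : ℕ → k)
    (x₀ y₀ : k) (hxy : x₀ ≠ y₀)
    (x y : ℕ → k) (hx0 : x 0 = x₀) (hy0 : y 0 = y₀)
    (hxstep : ∀ i, x (i + 1) = (x i)⁻¹ - a (i + 1))
    (hystep : ∀ i, y (i + 1) = (y i)⁻¹ - a (i + 1))
    (hxne : ∀ i < n, x i ≠ 0) (hxlt : ∀ i < n, ‖x i‖ < 1)
    (hy1 : ∀ i < n, ‖y i‖ = 1) :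
    ‖x n - y n‖ > ‖x₀ - y₀‖ := by
  subst hx0 hy0
  have hne := orbits_ne_of_ne hxy hxstep hystep
  have hgrow : StrictMonoOn (fun i ↦ ‖x i - y i‖) (Set.Iic n) := by
    refine strictMonoOn_Iic_of_lt_succ fun i hi ↦ ?_
    rw [Order.succ_eq_add_one, hxstep, hystep, sub_sub_sub_cancel_right]
    exact norm_sub_lt_norm_inv_sub_inv (hxne i hi) (hxlt i hi) (hy1 i hi) (hne i)
  exact hgrow (Set.mem_Iic.mpr n.zero_le) Set.self_mem_Iic hn
end
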